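/- arXiv:2203.15333 — 5 statements merged into one kernel-verified Lean document; each statement's English description precedes it below -/
import Mathlib

section
/- Let n, S ≥ 1 be integers, let ε > 0 and β > 0 be reals, and let ŵ^1, …, ŵ^S ∈ ℝ^n be samples. Set M := max{S, β}, and for each coordinate j ∈ {1,…,n} define w̄ᵃ_j := max_{1≤s≤S} ŵ^s_j + εM and w̲ᵃ_j := min_{1≤s≤S} ŵ^s_j − εM. Let W ⊆ ℝ^n be a Borel set with ŵ^s ∈ W for all s, and define Ω := W ∩ ∏_{j=1}^n [w̲ᵃ_j, w̄ᵃ_j]. Then every Borel probability measure P on ℝ^n satisfying P(W) = 1 and d_w(P, P_e) ≤ ε satisfies P(ℝ^n \ Ω) ≤ 1/M. In particular, the worst-case probability, over all probability measures supported on W whose 1-Wasserstein distance from the empirical distribution P_e is at most ε, of the realization lying outside Ω is bounded above by 1/max{β, S}. -/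
open MeasureTheory
open scoped ENNReal

/-- Theorem 1 of the paper. Any Borel probability measure `P`
supported on `W` whose 1-Wasserstein distance (with ℓ¹ ground metric) from the
empirical distribution of the samples is at most `ε` puts mass at most
`1 / max {S, β}` outside `Ω := W ∩ ∏_j [lb j, ub j]`. -/
theorem stmt0
    (n S : ℕ) (hn : 1 ≤ n) (hS : 1 ≤ S)
    (ε β : ℝ) (hε : 0 < ε) (hβ : 0 < β)
    (what : Fin S → Fin n → ℝ)
    (M : ℝ) (hM : M = max (S : ℝ) β)
    (ub lb : Fin n → ℝ)
    (hub : ∀ j, ub j = (⨆ s, what s j) + ε * M)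
    (hlb : ∀ j, lb j = (⨅ s, what s j) - ε * M)
    (W : Set (Fin n → ℝ)) (hW : MeasurableSet W)
    (hWs : ∀ s, what s ∈ W)
    (Ω : Set (Fin n → ℝ))
    (hΩ : Ω = W ∩ {w | ∀ j, lb j ≤ w j ∧ w j ≤ ub j})
    (P : Measure (Fin n → ℝ)) [IsProbabilityMeasure P]
    (hPW : P W = 1)
    (hdw : ∀ δ : ℝ, 0 < δ →
      ∃ π : Measure ((Fin n → ℝ) × (Fin n → ℝ)),
        IsProbabilityMeasure π ∧
        π.map Prod.fst = P ∧
        π.map Prod.snd = (S : ℝ≥0∞)⁻¹ • ∑ s : Fin S, Measure.dirac (what s) ∧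
        ∫⁻ p, ENNReal.ofReal (∑ j, |p.1 j - p.2 j|) ∂π ≤ ENNReal.ofReal (ε + δ)) :
    P Ωᶜ ≤ ENNReal.ofReal (1 / M) := by
  have hMpos : 0 < M := by rw [hM]; exact lt_max_of_lt_right hβ
  have hεM : 0 < ε * M := mul_pos hε hMpos
  haveI : Nonempty (Fin S) := ⟨⟨0, hS⟩⟩
  set T : Set (Fin n → ℝ) := Set.range what with hT
  have hTmeas : MeasurableSet T := (Set.finite_range what).measurableSet
  have hbox : MeasurableSet {w : Fin n → ℝ | ∀ j, lb j ≤ w j ∧ w j ≤ ub j} := by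
    have heq : {w : Fin n → ℝ | ∀ j, lb j ≤ w j ∧ w j ≤ ub j}
        = ⋂ j, ({w : Fin n → ℝ | lb j ≤ w j} ∩ {w | w j ≤ ub j}) := by
      ext w; simp [Set.mem_iInter, forall_and]
    rw [heq]
    exact MeasurableSet.iInter fun j =>
      ((measurableSet_le measurable_const (measurable_pi_apply j)).inter
        (measurableSet_le (measurable_pi_apply j) measurable_const))
  have hΩm : MeasurableSet Ω := hΩ ▸ hW.inter hbox
  set A := Ωᶜ ∩ W with hA
  have hAm : MeasurableSet A := hΩm.compl.inter hW
  -- pointwise bound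
  have hpt : ∀ x ∈ A, ∀ s : Fin S, ε * M ≤ ∑ j, |x j - what s j| := by
    intro x hx s
    obtain ⟨hxΩ, hxW⟩ := hx
    have hxbox : x ∉ {w : Fin n → ℝ | ∀ j, lb j ≤ w j ∧ w j ≤ ub j} := by
      intro hb; exact hxΩ (hΩ ▸ ⟨hxW, hb⟩)
    simp only [Set.mem_setOf_eq] at hxbox
    push_neg at hxbox
    obtain ⟨j, hj⟩ := hxbox
    have hkey : ε * M ≤ |x j - what s j| := by
      by_cases hcase : lb j ≤ x j
      · have hub' : ub j < x j := hj hcase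
        have hsle : what s j ≤ ⨆ s, what s j :=
          le_ciSup (Set.Finite.bddAbove (Set.finite_range fun s => what s j)) s
        have h1 : x j - what s j ≤ |x j - what s j| := le_abs_self _
        rw [hub] at hub'
        linarith
      · push_neg at hcase
        have hsle : (⨅ s, what s j) ≤ what s j :=
          ciInf_le (Set.Finite.bddBelow (Set.finite_range fun s => what s j)) s
        have h1 : what s j - x j ≤ |x j - what s j| := by
          rw [abs_sub_comm]; exact le_abs_self _
        rw [hlb] at hcase
        linarith
    calc ε * M ≤ |x j - what s j| := hkey
      _ ≤ ∑ j, |x j - what s j| :=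
        Finset.single_le_sum (f := fun i => |x i - what s i|) (fun i _ => abs_nonneg _) (Finset.mem_univ j)
  have hmeasf : Measurable fun p : (Fin n → ℝ) × (Fin n → ℝ) =>
      ENNReal.ofReal (∑ j, |p.1 j - p.2 j|) := by
    apply Measurable.ennreal_ofReal
    apply Finset.measurable_sum
    intro j _
    exact ((measurable_pi_apply j).comp measurable_fst).sub
      ((measurable_pi_apply j).comp measurable_snd) |>.abs
  -- key inequality for each δ
  have key : ∀ δ : ℝ, 0 < δ → P A ≤ ENNReal.ofReal (1 / M) + ENNReal.ofReal (δ / (ε * M)) := by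
    intro δ hδ
    obtain ⟨π, hπprob, hfst, hsnd, hcost⟩ := hdw δ hδ
    have hnull : π (Prod.snd ⁻¹' Tᶜ) = 0 := by
      have h1 : π.map Prod.snd Tᶜ = 0 := by
        rw [hsnd]
        have : ∀ s : Fin S, Measure.dirac (what s) Tᶜ = 0 := fun s => by
          rw [Measure.dirac_apply' _ hTmeas.compl]
          simp [Set.indicator, hT]
        simp [Measure.smul_apply, Measure.finset_sum_apply, this]
      rwa [Measure.map_apply measurable_snd hTmeas.compl] at h1
    have hPA : P A ≤ π (A ×ˢ T) := by
      have h2 : P A = π (A ×ˢ (Set.univ : Set (Fin n → ℝ))) := by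
        rw [← hfst, Measure.map_apply measurable_fst hAm]
        congr 1
        ext p; simp
      have hsub : A ×ˢ (Set.univ : Set (Fin n → ℝ)) ⊆ (A ×ˢ T) ∪ (Prod.snd ⁻¹' Tᶜ) := by
        intro p hp
        by_cases hpT : p.2 ∈ T
        · exact Or.inl ⟨hp.1, hpT⟩
        · exact Or.inr hpT
      calc P A = π (A ×ˢ Set.univ) := h2
        _ ≤ π ((A ×ˢ T) ∪ (Prod.snd ⁻¹' Tᶜ)) := measure_mono hsub
        _ ≤ π (A ×ˢ T) + π (Prod.snd ⁻¹' Tᶜ) := measure_union_le _ _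
        _ = π (A ×ˢ T) := by rw [hnull, add_zero]
    have hmul : ENNReal.ofReal (ε * M) * π (A ×ˢ T) ≤ ENNReal.ofReal (ε + δ) := by
      calc ENNReal.ofReal (ε * M) * π (A ×ˢ T)
          = ∫⁻ _ in A ×ˢ T, ENNReal.ofReal (ε * M) ∂π := (setLIntegral_const _ _).symm
        _ ≤ ∫⁻ p in A ×ˢ T, ENNReal.ofReal (∑ j, |p.1 j - p.2 j|) ∂π := by
            apply setLIntegral_mono hmeasf
            rintro p ⟨hp1, hp2⟩
            obtain ⟨s, hs⟩ := hp2
            apply ENNReal.ofReal_le_ofReal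
            have := hpt p.1 hp1 s
            rw [hs] at this
            exact this
        _ ≤ ∫⁻ p, ENNReal.ofReal (∑ j, |p.1 j - p.2 j|) ∂π := setLIntegral_le_lintegral _ _
        _ ≤ ENNReal.ofReal (ε + δ) := hcost
    have hdiv : P A ≤ ENNReal.ofReal ((ε + δ) / (ε * M)) := by
      rw [ENNReal.ofReal_div_of_pos hεM]
      rw [ENNReal.le_div_iff_mul_le (Or.inl (by positivity)) (Or.inl ENNReal.ofReal_ne_top)]
      calc P A * ENNReal.ofReal (ε * M) = ENNReal.ofReal (ε * M) * P A := mul_comm _ _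
        _ ≤ ENNReal.ofReal (ε * M) * π (A ×ˢ T) := by
            exact mul_le_mul_right hPA _
        _ ≤ ENNReal.ofReal (ε + δ) := hmul
    have hsplit : (ε + δ) / (ε * M) = 1 / M + δ / (ε * M) := by
      field_simp
    rw [hsplit, ENNReal.ofReal_add (by positivity) (by positivity)] at hdiv
    exact hdiv
  -- P Ωᶜ ≤ P A
  have hWc : P Wᶜ = 0 := by
    rw [measure_compl hW (measure_ne_top _ _), hPW, measure_univ, tsub_self]
  have hPΩc : P Ωᶜ ≤ P A := by
    calc P Ωᶜ ≤ P (A ∪ Wᶜ) := measure_mono (by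
        intro x hx
        by_cases hxW : x ∈ W
        · exact Or.inl ⟨hx, hxW⟩
        · exact Or.inr hxW)
      _ ≤ P A + P Wᶜ := measure_union_le _ _
      _ = P A := by rw [hWc, add_zero]
    -- limit argument
  refine hPΩc.trans (ENNReal.le_of_forall_pos_le_add fun η hη _ => ?_)
  have hδ : (0:ℝ) < (η : ℝ) * (ε * M) := by positivity
  have := key ((η : ℝ) * (ε * M)) hδ
  have heq : ((η : ℝ) * (ε * M)) / (ε * M) = (η : ℝ) := by field_simp
  rw [heq] at this
  simpa [ENNReal.ofReal_coe_nnreal] using this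
end

section
/- Let n, S ≥ 1 be integers, let ε > 0 and β > 0 be reals, and let ŵ^1, …, ŵ^S ∈ ℝ^n be samples. Set M := max{S, β}, K := 2n + 1, and for each coordinate j define w̄ᵃ_j := max_{1≤s≤S} ŵ^s_j + εM and w̲ᵃ_j := min_{1≤s≤S} ŵ^s_j − εM. Call a pair (α, d), where α^s_k ≥ 0 with ∑_{k=1}^K α^s_k = 1 for every s ∈ {1,…,S} and d^s_k ∈ ℝ^n, feasible if (1/S) ∑_{s=1}^S ∑_{k=1}^K α^s_k ‖d^s_k‖₁ ≤ ε, and define its out-of-box mass as m(α, d) := (1/S) ∑ { α^s_k : the point ŵ^s + d^s_k has some coordinate j with (ŵ^s + d^s_k)_j ≥ w̄ᵃ_j or (ŵ^s + d^s_k)_j ≤ w̲ᵃ_j }. Then the supremum of m(α, d) over all feasible pairs equals 1/M, and this supremum is attained. -/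
/- **Statement 1**: the discrete-transport optimization problem underlying Theorem 1.
The supremum of the out-of-box mass `m(α, d)` over feasible pairs `(α, d)` equals
`1 / max {S, β}`, and it is attained. -/
open Classical in
theorem stmt1
    (n S : ℕ) (hn : 1 ≤ n) (hS : 1 ≤ S)
    (ε β : ℝ) (hε : 0 < ε) (hβ : 0 < β)
    (what : Fin S → Fin n → ℝ)
    (M : ℝ) (hM : M = max (S : ℝ) β)
    (K : ℕ) (hK : K = 2 * n + 1)
    (ub lb : Fin n → ℝ)
    (hub : ∀ j, ub j = (⨆ s, what s j) + ε * M)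
    (hlb : ∀ j, lb j = (⨅ s, what s j) - ε * M) :
    IsGreatest
      { m : ℝ |
        ∃ (α : Fin S → Fin K → ℝ) (d : Fin S → Fin K → Fin n → ℝ),
          (∀ s k, 0 ≤ α s k) ∧
          (∀ s, ∑ k, α s k = 1) ∧
          (1 / (S : ℝ)) * ∑ s, ∑ k, α s k * (∑ j, |d s k j|) ≤ ε ∧
          m = (1 / (S : ℝ)) * ∑ s, ∑ k,
              (if ∃ j, ub j ≤ what s j + d s k j ∨ what s j + d s k j ≤ lb j
               then α s k else 0) }
      (1 / M) := by
  haveI : Nonempty (Fin S) := Fin.pos_iff_nonempty.mp (by omega)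
  have hS0 : (0:ℝ) < S := by exact_mod_cast (by omega : 0 < S)
  have hSM : (S:ℝ) ≤ M := hM ▸ le_max_left _ _
  have hM0 : (0:ℝ) < M := lt_of_lt_of_le hS0 hSM
  have hεM : (0:ℝ) < ε * M := mul_pos hε hM0
  have hsup_le : ∀ (j : Fin n) (s : Fin S), what s j ≤ ⨆ t, what t j := fun j s =>
    le_ciSup (f := fun t => what t j) (Set.Finite.bddAbove (Set.finite_range _)) s
  have hinf_le : ∀ (j : Fin n) (s : Fin S), (⨅ t, what t j) ≤ what s j := fun j s =>
    ciInf_le (f := fun t => what t j) (Set.Finite.bddBelow (Set.finite_range _)) s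
  constructor
  · -- membership: the optimum is attained
    set j0 : Fin n := ⟨0, by omega⟩ with hj0
    obtain ⟨sx, hsx⟩ := Finite.exists_max (fun t => what t j0)
    have hsup0 : (⨆ t, what t j0) = what sx j0 :=
      le_antisymm (ciSup_le hsx) (hsup_le j0 sx)
    set k0 : Fin K := ⟨0, by omega⟩ with hk0
    set k1 : Fin K := ⟨1, by omega⟩ with hk1
    have hk01 : k1 ≠ k0 := by simp [hk0, hk1, Fin.ext_iff]
    set α : Fin S → Fin K → ℝ := fun s k =>
      (if k = k0 then (if s = sx then 1 - (S:ℝ)/M else 1) else 0) +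
      (if k = k1 then (if s = sx then (S:ℝ)/M else 0) else 0) with hα
    set d : Fin S → Fin K → Fin n → ℝ := fun s k j =>
      if s = sx ∧ k = k1 ∧ j = j0 then ε * M else 0 with hd
    have hSMle : (S:ℝ)/M ≤ 1 := (div_le_one hM0).mpr hSM
    have hSMnn : (0:ℝ) ≤ (S:ℝ)/M := div_nonneg hS0.le hM0.le
    refine ⟨α, d, ?_, ?_, ?_, ?_⟩
    · intro s k
      have : (0:ℝ) ≤ (if k = k0 then (if s = sx then 1 - (S:ℝ)/M else 1) else 0) := by
        split_ifs <;> linarith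
      have h2 : (0:ℝ) ≤ (if k = k1 then (if s = sx then (S:ℝ)/M else 0) else 0) := by
        split_ifs <;> linarith
      simpa [hα] using add_nonneg this h2
    · intro s
      simp only [hα, Finset.sum_add_distrib, Finset.sum_ite_eq', Finset.mem_univ, if_true]
      split_ifs <;> ring
    · -- cost
      have hC : ∀ s k, α s k * (∑ j, |d s k j|) =
          if k = k1 then (if s = sx then ((S:ℝ)/M) * (ε*M) else 0) else 0 := by
        intro s k
        by_cases hs : s = sx
        · by_cases hkk : k = k1
          · have hαv : α s k = (S:ℝ)/M := by simp [hα, hs, hkk, hk01]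
            have hdv : ∀ j, |d s k j| = if j = j0 then ε * M else 0 := by
              intro j
              by_cases hj : j = j0 <;> simp [hd, hs, hkk, hj, abs_of_nonneg hεM.le]
            have hdsum : (∑ j, |d s k j|) = ε * M := by
              simp [hdv, Finset.sum_ite_eq']
            rw [hαv, hdsum, if_pos hkk, if_pos hs]
          · have hz : ∀ j, d s k j = 0 := fun j => by simp [hd, hkk]
            simp [hz, hkk]
        · have hz : ∀ j, d s k j = 0 := fun j => by simp [hd, hs]
          simp [hz, hs]
      simp only [hC, Finset.sum_ite_eq', Finset.mem_univ, if_true]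
      have : 1 / (S:ℝ) * (((S:ℝ)/M) * (ε*M)) = ε := by field_simp
      rw [this]
    · -- value of the mass
      have hI : ∀ s k,
          (if ∃ j, ub j ≤ what s j + d s k j ∨ what s j + d s k j ≤ lb j
            then α s k else 0) =
          if k = k1 then (if s = sx then (S:ℝ)/M else 0) else 0 := by
        intro s k
        by_cases hsk : s = sx ∧ k = k1
        · obtain ⟨hs, hkk⟩ := hsk
          have hcond : ∃ j, ub j ≤ what s j + d s k j ∨ what s j + d s k j ≤ lb j := by
            refine ⟨j0, Or.inl ?_⟩
            have hdval : d s k j0 = ε * M := by simp [hd, hs, hkk]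
            rw [hdval, hub j0, hsup0, hs]
          rw [if_pos hcond, if_pos hkk, if_pos hs]
          simp [hα, hs, hkk, hk01]
        · have hd0 : ∀ j, d s k j = 0 := by
            intro j; simp only [hd, ite_eq_right_iff]; intro h; exact absurd ⟨h.1, h.2.1⟩ hsk
          have hcond : ¬ ∃ j, ub j ≤ what s j + d s k j ∨ what s j + d s k j ≤ lb j := by
            push_neg
            intro j
            rw [hd0 j, add_zero, hub j, hlb j]
            constructor
            · linarith [hsup_le j s]
            · linarith [hinf_le j s]
          rw [if_neg hcond]
          rcases not_and_or.mp hsk with h | h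
          · simp [h]
          · simp [h]
      simp only [hI, Finset.sum_ite_eq', Finset.mem_univ, if_true]
      field_simp
  · -- upper bound
    rintro m ⟨α, d, hαnn, hαsum, hcost, hmass⟩
    rw [le_div_iff₀ hM0]
    -- key: m * (ε * M) ≤ ε
    have h1 : ∀ s k,
        (if ∃ j, ub j ≤ what s j + d s k j ∨ what s j + d s k j ≤ lb j
          then α s k else 0) * (ε * M) ≤ α s k * ∑ j, |d s k j| := by
      intro s k
      by_cases hc : ∃ j, ub j ≤ what s j + d s k j ∨ what s j + d s k j ≤ lb j
      · rw [if_pos hc]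
        obtain ⟨j, hj⟩ := hc
        have habs : ε * M ≤ |d s k j| := by
          rcases hj with hj | hj
          · rw [hub j] at hj
            have : ε * M ≤ d s k j := by linarith [hsup_le j s]
            exact le_trans this (le_abs_self _)
          · rw [hlb j] at hj
            have : d s k j ≤ -(ε * M) := by linarith [hinf_le j s]
            calc ε * M ≤ -(d s k j) := by linarith
              _ ≤ |d s k j| := neg_le_abs _
        have hsum : ε * M ≤ ∑ j, |d s k j| :=
          le_trans habs (Finset.single_le_sum (f := fun i => |d s k i|) (fun i _ => abs_nonneg _) (Finset.mem_univ j))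
        exact mul_le_mul_of_nonneg_left hsum (hαnn s k)
      · rw [if_neg hc, zero_mul]
        exact mul_nonneg (hαnn s k) (Finset.sum_nonneg fun i _ => abs_nonneg _)
    have h2 : m * (ε * M) ≤ ε := by
      calc m * (ε * M)
          = (1 / (S:ℝ)) * ∑ s, ∑ k,
              (if ∃ j, ub j ≤ what s j + d s k j ∨ what s j + d s k j ≤ lb j
                then α s k else 0) * (ε * M) := by
            rw [hmass, mul_assoc]
            simp only [Finset.sum_mul]
        _ ≤ (1 / (S:ℝ)) * ∑ s, ∑ k, α s k * ∑ j, |d s k j| := by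
            apply mul_le_mul_of_nonneg_left _ (by positivity)
            exact Finset.sum_le_sum fun s _ => Finset.sum_le_sum fun k _ => h1 s k
        _ ≤ ε := hcost
    nlinarith
end

section
/- Let I, T, S ≥ 1 be integers and ε ≥ 0. Let ŵ^1, …, ŵ^S ∈ ℝ^{I×T} be samples (entries indexed by pairs (i,t)), and let Ω := ∏_{i,t} [l_{it}, u_{it}] be a box with l_{it} ≤ ŵ^s_{it} ≤ u_{it} for all i, t, s. Let c_t, c⁰_t ∈ ℝ for t ∈ {1,…,T} and define h(w) := ∑_{t=1}^T ( c_t ∑_{i=1}^I w_{it} + c⁰_t ). Define v̄^s_{it} := u_{it} − ŵ^s_{it}, v̲^s_{it} := l_{it} − ŵ^s_{it}, z̄⁺_t := ∑_{i=1}^I ∑_{s=1}^S v̄^s_{it}, z̄⁻_t := −∑_{i=1}^I ∑_{s=1}^S v̲^s_{it}, g^c := ∑_{t=1}^T ( c_t (1/S) ∑_{i=1}^I ∑_{s=1}^S ŵ^s_{it} + c⁰_t ), and let g^v be the supremum of (1/S) ∑_{t=1}^T c_t (z⁺_t − z⁻_t) over all z⁺_t, z⁻_t ≥ 0 with (1/S)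 ∑_{t=1}^T (z⁺_t + z⁻_t) ≤ ε, z⁺_t ≤ z̄⁺_t and z⁻_t ≤ z̄⁻_t for all t. Then the supremum of ∫ h dP over all Borel probability measures P on ℝ^{I×T} with P(Ω) = 1 and d_w(P, P_e) ≤ ε equals g^c + g^v. -/
/-!
For `P` in the ball only the period totals `m_t = E_P[∑ i, w i t]` matter: the objective is
affine in them, a coupling with `P_e` bounds `∑ t, |m_t - e_t|` by `ε` (with `e_t` the
empirical totals), and the box gives `∑ i, l i t ≤ m_t ≤ ∑ i, u i t`. Splitting
`S (m_t - e_t)` into positive and negative parts gives a feasible point of the LP with the same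
value. Conversely, an LP point `(z⁺, z⁻)` is realised by moving coordinate `(i, t)` of every
sample the fraction `z⁺_t / z̄⁺_t` of its way up to `u i t` and `z⁻_t / z̄⁻_t` of its way down
to `l i t`: the new empirical distribution stays in the box, is coupled to `P_e` at cost at most
`(1/S) ∑ t, (z⁺_t + z⁻_t) ≤ ε`, and shifts the total of period `t` by `(z⁺_t - z⁻_t) / S`.
So the worst-case values are exactly `g^c` plus the LP values.
-/

open MeasureTheory Set
open scoped ENNReal

noncomputable def empiricalMeasure {α : Type*} [MeasurableSpace α] {n : ℕ} (x : Fin n → α) :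
    Measure α :=
  (n : ℝ≥0∞)⁻¹ • ∑ s, Measure.dirac (x s)

section EmpiricalMeasure

variable {α β : Type*} [MeasurableSpace α] [MeasurableSpace β] {n : ℕ}

lemma empiricalMeasure_eq_one_of_forall_mem [NeZero n] (x : Fin n → α) {A : Set α}
    (hA : MeasurableSet A) (hx : ∀ s, x s ∈ A) : empiricalMeasure x A = 1 := by
  simp [empiricalMeasure, Measure.dirac_apply' _ hA, indicator_of_mem (hx _),
    ENNReal.inv_mul_cancel (NeZero.ne (n : ℝ≥0∞)) (ENNReal.natCast_ne_top n)]

instance isProbabilityMeasure_empiricalMeasure [NeZero n] (x : Fin n → α) :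
    IsProbabilityMeasure (empiricalMeasure x) :=
  ⟨empiricalMeasure_eq_one_of_forall_mem x .univ fun _ => mem_univ _⟩

lemma map_empiricalMeasure {f : α → β} (hf : Measurable f) (x : Fin n → α) :
    (empiricalMeasure x).map f = empiricalMeasure (f ∘ x) := by
  simp [empiricalMeasure, Measure.map_smul, Measure.map_finset_sum hf.aemeasurable,
    Measure.map_dirac' hf]

lemma lintegral_empiricalMeasure [MeasurableSingletonClass α] (x : Fin n → α) (f : α → ℝ≥0∞) :
    ∫⁻ a, f a ∂empiricalMeasure x = (n : ℝ≥0∞)⁻¹ * ∑ s, f (x s) := by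
  simp [empiricalMeasure]

lemma integrable_empiricalMeasure [NeZero n] [MeasurableSingletonClass α] (x : Fin n → α)
    (f : α → ℝ) :
    Integrable f (empiricalMeasure x) :=
  (integrable_finsetSum_measure.2 fun _ _ => integrable_dirac (by simp)).smul_measure
    (ENNReal.inv_ne_top.2 (NeZero.ne _))

lemma integral_empiricalMeasure [MeasurableSingletonClass α] (x : Fin n → α) (f : α → ℝ) :
    ∫ a, f a ∂empiricalMeasure x = (n : ℝ)⁻¹ * ∑ s, f (x s) := by
  simp [empiricalMeasure, integral_finsetSum_measure fun _ _ => integrable_dirac (by simp)]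

end EmpiricalMeasure

def WassersteinLE {α : Type*} [MeasurableSpace α] (cost : α → α → ℝ) (P Q : Measure α)
    (ε : ℝ) : Prop :=
  ∀ δ : ℝ, 0 < δ → ∃ π : Measure (α × α), IsProbabilityMeasure π ∧
    π.map Prod.fst = P ∧ π.map Prod.snd = Q ∧
    ∫⁻ p, ENNReal.ofReal (cost p.1 p.2) ∂π ≤ ENNReal.ofReal (ε + δ)

section WassersteinLE

variable {α : Type*} [MeasurableSpace α] {cost : α → α → ℝ} {ε : ℝ}

lemma wassersteinLE_empiricalMeasure [MeasurableSingletonClass α] {n : ℕ} [NeZero n]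
    (x y : Fin n → α) (hcost : ∀ s, 0 ≤ cost (x s) (y s))
    (h : (n : ℝ)⁻¹ * ∑ s, cost (x s) (y s) ≤ ε) :
    WassersteinLE cost (empiricalMeasure x) (empiricalMeasure y) ε := by
  intro δ hδ
  refine ⟨empiricalMeasure fun s => (x s, y s), inferInstance,
    map_empiricalMeasure measurable_fst _, map_empiricalMeasure measurable_snd _, ?_⟩
  calc ∫⁻ p, ENNReal.ofReal (cost p.1 p.2) ∂empiricalMeasure (fun s => (x s, y s))
      = ENNReal.ofReal ((n : ℝ)⁻¹ * ∑ s, cost (x s) (y s)) := by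
        rw [lintegral_empiricalMeasure, ENNReal.ofReal_mul (by positivity),
          ENNReal.ofReal_sum_of_nonneg fun s _ => hcost s,
          ENNReal.ofReal_inv_of_pos (Nat.cast_pos.2 (NeZero.pos n)), ENNReal.ofReal_natCast]
    _ ≤ ENNReal.ofReal (ε + δ) := ENNReal.ofReal_le_ofReal (by linarith)

lemma WassersteinLE.sum_abs_integral_sub_le {κ : Type*} [Fintype κ] {P Q : Measure α}
    (h : WassersteinLE cost P Q ε) (hε : 0 ≤ ε) {f : κ → α → ℝ} (hfP : ∀ k, Integrable (f k) P)
    (hfQ : ∀ k, Integrable (f k) Q) (hf : ∀ a b, ∑ k, |f k a - f k b| ≤ cost a b) :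
    ∑ k, |∫ a, f k a ∂P - ∫ a, f k a ∂Q| ≤ ε := by
  refine le_of_forall_pos_le_add fun δ hδ => ?_
  obtain ⟨π, -, rfl, rfl, hπ⟩ := h δ hδ
  have hfst k : Integrable (fun p => f k p.1) π :=
    (hfP k).comp_aemeasurable measurable_fst.aemeasurable
  have hsnd k : Integrable (fun p => f k p.2) π :=
    (hfQ k).comp_aemeasurable measurable_snd.aemeasurable
  have hmean k : ∫ a, f k a ∂π.map Prod.fst - ∫ a, f k a ∂π.map Prod.snd
      = ∫ p, (f k p.1 - f k p.2) ∂π := by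
    rw [integral_map measurable_fst.aemeasurable (hfP k).aestronglyMeasurable,
      integral_map measurable_snd.aemeasurable (hfQ k).aestronglyMeasurable,
      integral_sub (hfst k) (hsnd k)]
  rw [← ENNReal.ofReal_le_ofReal_iff (by linarith),
    ENNReal.ofReal_sum_of_nonneg fun k _ => abs_nonneg _]
  calc ∑ k, ENNReal.ofReal |∫ a, f k a ∂π.map Prod.fst - ∫ a, f k a ∂π.map Prod.snd|
      ≤ ∑ k, ∫⁻ p, ‖f k p.1 - f k p.2‖ₑ ∂π := by
        refine Finset.sum_le_sum fun k _ => ?_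
        rw [← Real.enorm_eq_ofReal_abs, hmean]
        exact enorm_integral_le_lintegral_enorm _
    _ = ∫⁻ p, ∑ k, ‖f k p.1 - f k p.2‖ₑ ∂π :=
        (lintegral_finsetSum' _ fun k _ => ((hfst k).sub (hsnd k)).aemeasurable.enorm).symm
    _ ≤ ∫⁻ p, ENNReal.ofReal (cost p.1 p.2) ∂π := lintegral_mono fun p => by
        simp_rw [Real.enorm_eq_ofReal_abs]
        rw [← ENNReal.ofReal_sum_of_nonneg fun k _ => abs_nonneg _]
        exact ENNReal.ofReal_le_ofReal (hf p.1 p.2)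
    _ ≤ ENNReal.ofReal (ε + δ) := hπ

end WassersteinLE

lemma Continuous.integrable_of_ae_mem_compact {X : Type*} [TopologicalSpace X] [T2Space X]
    [MeasurableSpace X] [OpensMeasurableSpace X] {μ : Measure X} [IsFiniteMeasure μ]
    {K : Set X} (hK : IsCompact K) (hμ : ∀ᵐ x ∂μ, x ∈ K) {f : X → ℝ} (hf : Continuous f) :
    Integrable f μ :=
  (hf.continuousOn.integrableOn_compact hK).integrable_of_ae_notMem_eq_zero
    (hμ.mono fun _ hx hx' => absurd hx hx')

section LP

variable {κ : Type*} [Fintype κ] {n : ℕ} {ε : ℝ} {c zubp zubm : κ → ℝ}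

def lpValues (n : ℕ) (ε : ℝ) (c zubp zubm : κ → ℝ) : Set ℝ :=
  { x : ℝ | ∃ zp zm : κ → ℝ,
    (∀ t, 0 ≤ zp t) ∧ (∀ t, 0 ≤ zm t) ∧
    (1 / (n : ℝ)) * ∑ t, (zp t + zm t) ≤ ε ∧
    (∀ t, zp t ≤ zubp t) ∧ (∀ t, zm t ≤ zubm t) ∧
    x = (1 / (n : ℝ)) * ∑ t, c t * (zp t - zm t) }

lemma bddAbove_lpValues : BddAbove (lpValues n ε c zubp zubm) := by
  refine ⟨(1 / (n : ℝ)) * ∑ t, |c t| * (zubp t + zubm t), ?_⟩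
  rintro _ ⟨zp, zm, hzp, hzm, -, hzpu, hzmu, rfl⟩
  refine mul_le_mul_of_nonneg_left (Finset.sum_le_sum fun t _ => ?_) (by positivity)
  calc c t * (zp t - zm t) ≤ |c t| * |zp t - zm t| := abs_mul (c t) _ ▸ le_abs_self _
    _ ≤ |c t| * (zubp t + zubm t) := by
      gcongr
      exact abs_sub_le_iff.2
        ⟨by linarith [hzm t, hzpu t, hzmu t], by linarith [hzp t, hzpu t, hzmu t]⟩

lemma zero_mem_lpValues (hε : 0 ≤ ε) (hzubp : ∀ t, 0 ≤ zubp t) (hzubm : ∀ t, 0 ≤ zubm t) :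
    0 ∈ lpValues n ε c zubp zubm :=
  ⟨0, 0, fun _ => le_rfl, fun _ => le_rfl, by simpa using hε, hzubp, hzubm, by simp⟩

lemma mem_lpValues_of_sum_abs_le [NeZero n] {d : κ → ℝ} (hd : ∑ t, |d t| ≤ ε)
    (hdu : ∀ t, n * d t ≤ zubp t) (hdl : ∀ t, -(n * d t) ≤ zubm t)
    (hzubp : ∀ t, 0 ≤ zubp t) (hzubm : ∀ t, 0 ≤ zubm t) :
    ∑ t, c t * d t ∈ lpValues n ε c zubp zubm := by
  have hn : (n : ℝ) ≠ 0 := NeZero.ne _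
  refine ⟨fun t => (n * d t)⁺, fun t => (n * d t)⁻, fun t => posPart_nonneg _,
    fun t => negPart_nonneg _, ?_, fun t => sup_le (hdu t) (hzubp t),
    fun t => sup_le (hdl t) (hzubm t), ?_⟩
  · simp_rw [posPart_add_negPart, abs_mul, Nat.abs_cast, ← Finset.mul_sum]
    rwa [← mul_assoc, one_div_mul_cancel hn, one_mul]
  · simp_rw [posPart_sub_negPart, Finset.mul_sum]
    refine Finset.sum_congr rfl fun t _ => ?_
    field_simp

end LP

section Objective

variable {ι κ : Type*} [Fintype ι] [Fintype κ] {n : ℕ}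

def l1Dist (x y : ι → κ → ℝ) : ℝ :=
  ∑ i, ∑ t, |x i t - y i t|

def objective (c c0 : κ → ℝ) (w : ι → κ → ℝ) : ℝ :=
  ∑ t, (c t * ∑ i, w i t + c0 t)

lemma l1Dist_nonneg (x y : ι → κ → ℝ) : 0 ≤ l1Dist x y := by
  unfold l1Dist; positivity

lemma sum_abs_sum_sub_le_l1Dist (x y : ι → κ → ℝ) :
    ∑ t, |∑ i, x i t - ∑ i, y i t| ≤ l1Dist x y := by
  rw [l1Dist, Finset.sum_comm]
  refine Finset.sum_le_sum fun t _ => ?_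
  rw [← Finset.sum_sub_distrib]
  exact Finset.abs_sum_le_sum_abs _ _

lemma integral_objective {P : Measure (ι → κ → ℝ)} [IsProbabilityMeasure P] (c c0 : κ → ℝ)
    (hP : ∀ t, Integrable (fun w => ∑ i, w i t) P) :
    ∫ w, objective c c0 w ∂P = ∑ t, (c t * ∫ w, ∑ i, w i t ∂P + c0 t) := by
  unfold objective
  have hterm t : Integrable (fun w : ι → κ → ℝ => c t * ∑ i, w i t + c0 t) P :=
    ((hP t).const_mul (c t)).add (integrable_const _)
  rw [integral_finsetSum _ fun t _ => hterm t]
  refine Finset.sum_congr rfl fun t _ => ?_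
  rw [integral_add ((hP t).const_mul _) (integrable_const _), integral_const_mul,
    integral_const, probReal_univ, one_smul]

lemma integral_objective_empiricalMeasure [NeZero n] (what : Fin n → ι → κ → ℝ)
    (c c0 : κ → ℝ) :
    ∫ w, objective c c0 w ∂empiricalMeasure what
      = ∑ t, (c t * ((1 / (n : ℝ)) * ∑ i, ∑ s, what s i t) + c0 t) := by
  rw [integral_objective c c0 fun t => integrable_empiricalMeasure _ _]
  simp_rw [integral_empiricalMeasure what, one_div]
  refine Finset.sum_congr rfl fun t _ => ?_
  rw [Finset.sum_comm]

end Objective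

lemma exists_mem_Icc_mul_eq {z b : ℝ} (hz : 0 ≤ z) (hzb : z ≤ b) :
    ∃ r ∈ Icc (0 : ℝ) 1, r * b = z := by
  rcases (hz.trans hzb).eq_or_lt with rfl | hb
  · exact ⟨0, ⟨le_rfl, zero_le_one⟩, by linarith [le_antisymm hzb hz]⟩
  · exact ⟨z / b, ⟨div_nonneg hz hb.le, div_le_one_of_le₀ hzb hb.le⟩, div_mul_cancel₀ z hb.ne'⟩

section Shift

variable {ι κ : Type*} {l u w : ι → κ → ℝ} {rp rm : κ → ℝ}

def shiftTowardBounds (l u : ι → κ → ℝ) (rp rm : κ → ℝ) (w : ι → κ → ℝ) : ι → κ → ℝ :=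
  fun i t => w i t + rp t * (u i t - w i t) + rm t * (l i t - w i t)

lemma shiftTowardBounds_sub (i : ι) (t : κ) :
    shiftTowardBounds l u rp rm w i t - w i t
      = rp t * (u i t - w i t) - rm t * (w i t - l i t) := by
  unfold shiftTowardBounds; ring

lemma shiftTowardBounds_mem_Icc (hw : w ∈ Icc l u) (hrp : ∀ t, rp t ∈ Icc 0 1)
    (hrm : ∀ t, rm t ∈ Icc 0 1) : shiftTowardBounds l u rp rm w ∈ Icc l u := by
  refine ⟨fun i t => ?_, fun i t => ?_⟩ <;>
  · have hu : 0 ≤ u i t - w i t := sub_nonneg.2 (hw.2 i t)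
    have hl : 0 ≤ w i t - l i t := sub_nonneg.2 (hw.1 i t)
    obtain ⟨hrp0, hrp1⟩ := hrp t
    obtain ⟨hrm0, hrm1⟩ := hrm t
    unfold shiftTowardBounds
    linarith [mul_nonneg hrp0 hu, mul_nonneg hrm0 hl, mul_nonneg (sub_nonneg.2 hrp1) hu,
      mul_nonneg (sub_nonneg.2 hrm1) hl]

lemma abs_shiftTowardBounds_sub_le (hw : w ∈ Icc l u) (hrp : ∀ t, 0 ≤ rp t)
    (hrm : ∀ t, 0 ≤ rm t) (i : ι) (t : κ) :
    |shiftTowardBounds l u rp rm w i t - w i t|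
      ≤ rp t * (u i t - w i t) + rm t * (w i t - l i t) := by
  have hu : 0 ≤ rp t * (u i t - w i t) := mul_nonneg (hrp t) (sub_nonneg.2 (hw.2 i t))
  have hl : 0 ≤ rm t * (w i t - l i t) := mul_nonneg (hrm t) (sub_nonneg.2 (hw.1 i t))
  rw [shiftTowardBounds_sub, abs_sub_le_iff]
  constructor <;> linarith

end Shift

section Slack

variable {ι κ : Type*} [Fintype ι] {n : ℕ} {what : Fin n → ι → κ → ℝ} {l u : ι → κ → ℝ}
  {rp rm : κ → ℝ}

def upperSlack (what : Fin n → ι → κ → ℝ) (u : ι → κ → ℝ) (t : κ) : ℝ :=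
  ∑ i, ∑ s, (u i t - what s i t)

def lowerSlack (what : Fin n → ι → κ → ℝ) (l : ι → κ → ℝ) (t : κ) : ℝ :=
  ∑ i, ∑ s, (what s i t - l i t)

lemma upperSlack_nonneg (hu : ∀ s, what s ≤ u) (t : κ) : 0 ≤ upperSlack what u t :=
  Finset.sum_nonneg fun i _ => Finset.sum_nonneg fun s _ => sub_nonneg.2 (hu s i t)

lemma lowerSlack_nonneg (hl : ∀ s, l ≤ what s) (t : κ) : 0 ≤ lowerSlack what l t :=
  Finset.sum_nonneg fun i _ => Finset.sum_nonneg fun s _ => sub_nonneg.2 (hl s i t)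

lemma upperSlack_eq (t : κ) :
    upperSlack what u t = n * ∑ i, u i t - ∑ i, ∑ s, what s i t := by
  simp [upperSlack, Finset.sum_sub_distrib, Finset.mul_sum]

lemma lowerSlack_eq (t : κ) :
    lowerSlack what l t = ∑ i, ∑ s, what s i t - n * ∑ i, l i t := by
  simp [lowerSlack, Finset.sum_sub_distrib, Finset.mul_sum]

lemma sum_sum_shiftTowardBounds_sub (t : κ) :
    ∑ i, ∑ s, (shiftTowardBounds l u rp rm (what s) i t - what s i t)
      = rp t * upperSlack what u t - rm t * lowerSlack what l t := by
  simp_rw [shiftTowardBounds_sub, upperSlack, lowerSlack, Finset.mul_sum,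
    ← Finset.sum_sub_distrib]

lemma sum_l1Dist_shiftTowardBounds_le [Fintype κ] (hbox : ∀ s, what s ∈ Icc l u)
    (hrp : ∀ t, 0 ≤ rp t) (hrm : ∀ t, 0 ≤ rm t) :
    ∑ s, l1Dist (shiftTowardBounds l u rp rm (what s)) (what s)
      ≤ ∑ t, (rp t * upperSlack what u t + rm t * lowerSlack what l t) := calc
  _ ≤ ∑ s, ∑ i, ∑ t, (rp t * (u i t - what s i t) + rm t * (what s i t - l i t)) :=
      Finset.sum_le_sum fun s _ => Finset.sum_le_sum fun i _ => Finset.sum_le_sum fun t _ =>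
        abs_shiftTowardBounds_sub_le (hbox s) hrp hrm i t
  _ = _ := by
      simp_rw [upperSlack, lowerSlack, Finset.mul_sum, ← Finset.sum_add_distrib]
      rw [Finset.sum_comm]
      exact (Finset.sum_congr rfl fun i _ => Finset.sum_comm).trans Finset.sum_comm

end Slack

section WorstCase

variable {ι κ : Type*} [Fintype ι] [Fintype κ] {n : ℕ} {what : Fin n → ι → κ → ℝ}
  {l u : ι → κ → ℝ}

lemma integral_objective_sub_mem_lpValues [NeZero n] {ε : ℝ} (hε : 0 ≤ ε)
    (hl : ∀ s, l ≤ what s) (hu : ∀ s, what s ≤ u) (c c0 : κ → ℝ) {P : Measure (ι → κ → ℝ)}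
    [IsProbabilityMeasure P] (hP : P (Icc l u) = 1)
    (hW : WassersteinLE l1Dist P (empiricalMeasure what) ε) :
    ∫ w, objective c c0 w ∂P - ∫ w, objective c c0 w ∂empiricalMeasure what
      ∈ lpValues n ε c (upperSlack what u) (lowerSlack what l) := by
  have hPbox : ∀ᵐ w ∂P, w ∈ Icc l u :=
    (ae_mem_iff_measure_eq measurableSet_Icc.nullMeasurableSet).2 (by rw [hP, measure_univ])
  have hint t : Integrable (fun w : ι → κ → ℝ => ∑ i, w i t) P :=
    (by fun_prop : Continuous _).integrable_of_ae_mem_compact isCompact_Icc hPbox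
  have hint' t := integrable_empiricalMeasure what fun w : ι → κ → ℝ => ∑ i, w i t
  have hmean t : ∫ w, ∑ i, w i t ∂P ∈ Icc (∑ i, l i t) (∑ i, u i t) :=
    (convex_Icc _ _).integral_mem isClosed_Icc (hPbox.mono fun w hw =>
      ⟨Finset.sum_le_sum fun i _ => hw.1 i t, Finset.sum_le_sum fun i _ => hw.2 i t⟩) (hint t)
  have hemp t : n * ∫ w, ∑ i, w i t ∂empiricalMeasure what = ∑ i, ∑ s, what s i t := by
    rw [integral_empiricalMeasure, ← mul_assoc, mul_inv_cancel₀ (NeZero.ne _), one_mul,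
      Finset.sum_comm]
  rw [integral_objective c c0 hint, integral_objective c c0 hint', ← Finset.sum_sub_distrib]
  simp_rw [add_sub_add_right_eq_sub, ← mul_sub]
  refine mem_lpValues_of_sum_abs_le
    (hW.sum_abs_integral_sub_le hε hint hint' sum_abs_sum_sub_le_l1Dist) (fun t => ?_)
    (fun t => ?_) (upperSlack_nonneg hu) (lowerSlack_nonneg hl)
  · rw [upperSlack_eq, mul_sub, hemp]
    gcongr
    exact (hmean t).2
  · rw [lowerSlack_eq, mul_sub, hemp, neg_sub]
    gcongr
    exact (hmean t).1

lemma exists_feasible_of_mem_lpValues [NeZero n] {ε : ℝ} (hl : ∀ s, l ≤ what s)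
    (hu : ∀ s, what s ≤ u) (c c0 : κ → ℝ) {y : ℝ}
    (hy : y ∈ lpValues n ε c (upperSlack what u) (lowerSlack what l)) :
    ∃ P : Measure (ι → κ → ℝ), IsProbabilityMeasure P ∧ P (Icc l u) = 1 ∧
      WassersteinLE l1Dist P (empiricalMeasure what) ε ∧
      ∫ w, objective c c0 w ∂P = ∫ w, objective c c0 w ∂empiricalMeasure what + y := by
  obtain ⟨zp, zm, hzp, hzm, hcost, hzpu, hzmu, rfl⟩ := hy
  choose rp hrp hrpz using fun t => exists_mem_Icc_mul_eq (hzp t) (hzpu t)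
  choose rm hrm hrmz using fun t => exists_mem_Icc_mul_eq (hzm t) (hzmu t)
  have hbox s : what s ∈ Icc l u := ⟨hl s, hu s⟩
  set w' := fun s => shiftTowardBounds l u rp rm (what s)
  refine ⟨empiricalMeasure w', inferInstance, empiricalMeasure_eq_one_of_forall_mem _
    measurableSet_Icc fun s => shiftTowardBounds_mem_Icc (hbox s) hrp hrm,
    wassersteinLE_empiricalMeasure _ _ (fun s => l1Dist_nonneg _ _) ?_, ?_⟩
  · calc (n : ℝ)⁻¹ * ∑ s, l1Dist (w' s) (what s) ≤ (n : ℝ)⁻¹ * ∑ t, (zp t + zm t) := by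
          gcongr
          simpa only [hrpz, hrmz] using
            sum_l1Dist_shiftTowardBounds_le hbox (fun t => (hrp t).1) (fun t => (hrm t).1)
      _ ≤ ε := by simpa only [one_div] using hcost
  · have hshift t : ∫ w, ∑ i, w i t ∂empiricalMeasure w'
        - ∫ w, ∑ i, w i t ∂empiricalMeasure what = (1 / (n : ℝ)) * (zp t - zm t) := by
      rw [integral_empiricalMeasure, integral_empiricalMeasure, ← mul_sub,
        ← Finset.sum_sub_distrib, ← hrpz, ← hrmz, one_div, ← sum_sum_shiftTowardBounds_sub,
        Finset.sum_comm]
      simp only [w', Finset.sum_sub_distrib]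
    rw [← sub_eq_iff_eq_add', integral_objective c c0 fun t => integrable_empiricalMeasure _ _,
      integral_objective c c0 fun t => integrable_empiricalMeasure _ _,
      ← Finset.sum_sub_distrib, Finset.mul_sum]
    simp_rw [add_sub_add_right_eq_sub, ← mul_sub, hshift]
    exact Finset.sum_congr rfl fun t _ => by ring

end WorstCase

theorem stmt4_general
    (I T S : ℕ) (hS : 1 ≤ S)
    (ε : ℝ) (hε : 0 ≤ ε)
    (what : Fin S → Fin I → Fin T → ℝ)
    (l u : Fin I → Fin T → ℝ)
    (hl : ∀ i t s, l i t ≤ what s i t) (hu : ∀ i t s, what s i t ≤ u i t)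
    (c c0 : Fin T → ℝ)
    (gc : ℝ)
    (hgc : gc = ∑ t, (c t * ((1 / (S : ℝ)) * ∑ i, ∑ s, what s i t) + c0 t))
    (zubp zubm : Fin T → ℝ)
    (hzubp : ∀ t, zubp t = ∑ i, ∑ s, (u i t - what s i t))
    (hzubm : ∀ t, zubm t = -∑ i, ∑ s, (l i t - what s i t))
    (gv : ℝ)
    (hgv : gv = sSup { x : ℝ |
      ∃ zp zm : Fin T → ℝ,
        (∀ t, 0 ≤ zp t) ∧ (∀ t, 0 ≤ zm t) ∧
        (1 / (S : ℝ)) * ∑ t, (zp t + zm t) ≤ ε ∧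
        (∀ t, zp t ≤ zubp t) ∧ (∀ t, zm t ≤ zubm t) ∧
        x = (1 / (S : ℝ)) * ∑ t, c t * (zp t - zm t) }) :
    sSup { x : ℝ |
      ∃ P : Measure (Fin I → Fin T → ℝ), IsProbabilityMeasure P ∧
        P {w | ∀ i t, l i t ≤ w i t ∧ w i t ≤ u i t} = 1 ∧
        (∀ δ : ℝ, 0 < δ →
          ∃ π : Measure ((Fin I → Fin T → ℝ) × (Fin I → Fin T → ℝ)),
            IsProbabilityMeasure π ∧
            π.map Prod.fst = P ∧
            π.map Prod.snd = (S : ℝ≥0∞)⁻¹ • ∑ s : Fin S, Measure.dirac (what s) ∧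
            ∫⁻ p, ENNReal.ofReal (∑ i, ∑ t, |p.1 i t - p.2 i t|) ∂π
              ≤ ENNReal.ofReal (ε + δ)) ∧
        x = ∫ w, (∑ t, (c t * ∑ i, w i t + c0 t)) ∂P } = gc + gv := by
  have : NeZero S := ⟨by omega⟩
  have hl' s : l ≤ what s := fun i t => hl i t s
  have hu' s : what s ≤ u := fun i t => hu i t s
  obtain rfl : zubp = upperSlack what u := funext hzubp
  obtain rfl : zubm = lowerSlack what l := funext fun t => by
    simp_rw [hzubm, lowerSlack, ← Finset.sum_neg_distrib, neg_sub]
  rw [← integral_objective_empiricalMeasure] at hgc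
  subst hgc
  have hbox : {w : Fin I → Fin T → ℝ | ∀ i t, l i t ≤ w i t ∧ w i t ≤ u i t} = Icc l u := by
    ext w; simp [Pi.le_def, forall_and]
  change gv = sSup (lpValues S ε c _ _) at hgv
  have hne : (lpValues S ε c (upperSlack what u) (lowerSlack what l)).Nonempty :=
    ⟨0, zero_mem_lpValues hε (upperSlack_nonneg hu') (lowerSlack_nonneg hl')⟩
  refine Eq.trans ?_ (hgv ▸ (OrderIso.addLeft _).map_csSup' hne bddAbove_lpValues).symm
  rw [hbox]
  congr 1
  ext x
  constructor
  · rintro ⟨P, hP, hPbox, hW, rfl⟩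
    exact ⟨_, integral_objective_sub_mem_lpValues hε hl' hu' c c0 hPbox hW, add_sub_cancel _ _⟩
  · rintro ⟨y, hy, rfl⟩
    obtain ⟨P, hP, hPbox, hW, hval⟩ := exists_feasible_of_mem_lpValues hl' hu' c c0 hy
    exact ⟨P, hP, hPbox, hW, hval.symm⟩

/-- Theorem 2 of the paper. The worst-case expectation of the affine
objective `h(w) = ∑_t (c_t ∑_i w_{it} + c⁰_t)` over the Wasserstein ball of radius `ε`
(ℓ¹ ground metric) around the empirical distribution, restricted to the box
`Ω = ∏_{i,t} [l_{it}, u_{it}]`, equals `g^c + g^v` where `g^v` is the optimal value of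
a linear program whose size is independent of the sample size `S`. -/
theorem stmt4
    (I T S : ℕ) (hI : 1 ≤ I) (hT : 1 ≤ T) (hS : 1 ≤ S)
    (ε : ℝ) (hε : 0 ≤ ε)
    (what : Fin S → Fin I → Fin T → ℝ)
    (l u : Fin I → Fin T → ℝ)
    (hl : ∀ i t s, l i t ≤ what s i t) (hu : ∀ i t s, what s i t ≤ u i t)
    (c c0 : Fin T → ℝ)
    (gc : ℝ)
    (hgc : gc = ∑ t, (c t * ((1 / (S : ℝ)) * ∑ i, ∑ s, what s i t) + c0 t))
    (zubp zubm : Fin T → ℝ)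
    (hzubp : ∀ t, zubp t = ∑ i, ∑ s, (u i t - what s i t))
    (hzubm : ∀ t, zubm t = -∑ i, ∑ s, (l i t - what s i t))
    (gv : ℝ)
    (hgv : gv = sSup { x : ℝ |
      ∃ zp zm : Fin T → ℝ,
        (∀ t, 0 ≤ zp t) ∧ (∀ t, 0 ≤ zm t) ∧
        (1 / (S : ℝ)) * ∑ t, (zp t + zm t) ≤ ε ∧
        (∀ t, zp t ≤ zubp t) ∧ (∀ t, zm t ≤ zubm t) ∧
        x = (1 / (S : ℝ)) * ∑ t, c t * (zp t - zm t) }) :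
    sSup { x : ℝ |
      ∃ P : Measure (Fin I → Fin T → ℝ), IsProbabilityMeasure P ∧
        P {w | ∀ i t, l i t ≤ w i t ∧ w i t ≤ u i t} = 1 ∧
        (∀ δ : ℝ, 0 < δ →
          ∃ π : Measure ((Fin I → Fin T → ℝ) × (Fin I → Fin T → ℝ)),
            IsProbabilityMeasure π ∧
            π.map Prod.fst = P ∧
            π.map Prod.snd = (S : ℝ≥0∞)⁻¹ • ∑ s : Fin S, Measure.dirac (what s) ∧
            ∫⁻ p, ENNReal.ofReal (∑ i, ∑ t, |p.1 i t - p.2 i t|) ∂π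
              ≤ ENNReal.ofReal (ε + δ)) ∧
        x = ∫ w, (∑ t, (c t * ∑ i, w i t + c0 t)) ∂P } = gc + gv :=
  stmt4_general I T S hS ε hε what l u hl hu c c0 gc hgc zubp zubm hzubp hzubm gv hgv
end

section
/- Let I, T, S ≥ 1 be integers and ε ≥ 0. Let c_t ∈ ℝ for t ∈ {1,…,T}, and let v̲^s_{it} ≤ 0 ≤ v̄^s_{it} be reals for all i ∈ {1,…,I}, s ∈ {1,…,S}, t ∈ {1,…,T}. Define z̄⁺_t := ∑_{i,s} v̄^s_{it} and z̄⁻_t := −∑_{i,s} v̲^s_{it}. Then the supremum of (1/S) ∑_{i,s,t} c_t v^s_{it} over all reals v^s_{it} with v̲^s_{it} ≤ v^s_{it} ≤ v̄^s_{it} for all i, s, t and (1/S) ∑_{i,s,t} |v^s_{it}| ≤ ε equals the supremum of (1/S) ∑_{t=1}^T c_t (z⁺_t − z⁻_t) over all z⁺_t, z⁻_t ≥ 0 with (1/S) ∑_{t=1}^T (z⁺_t + z⁻_t) ≤ ε, z⁺_t ≤ z̄⁺_t and z⁻_t ≤ z̄⁻_t for all t. -/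
private lemma sum_rot {I S T : ℕ} (f : Fin I → Fin S → Fin T → ℝ) :
    ∑ i, ∑ s, ∑ t, f i s t = ∑ t, ∑ i, ∑ s, f i s t := by
  calc ∑ i, ∑ s, ∑ t, f i s t = ∑ i, ∑ t, ∑ s, f i s t :=
        Finset.sum_congr rfl fun _ _ => Finset.sum_comm
    _ = ∑ t, ∑ i, ∑ s, f i s t := Finset.sum_comm

private lemma max_add_max (a : ℝ) : max a 0 + max (-a) 0 = |a| := by
  rcases le_total a 0 with h | h
  · simp [max_eq_right h, max_eq_left (neg_nonneg.2 h), abs_of_nonpos h]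
  · simp [max_eq_left h, max_eq_right (neg_nonpos.2 h), abs_of_nonneg h]

private lemma max_sub_max (a : ℝ) : max a 0 - max (-a) 0 = a := by
  rcases le_total a 0 with h | h
  · simp [max_eq_right h, max_eq_left (neg_nonneg.2 h)]
  · simp [max_eq_left h, max_eq_right (neg_nonpos.2 h)]

/-- the core linear-programming equivalence in the proof of Theorem 2.
The optimization over the `I·S·T` perturbation variables `v^s_{it}` (per-variable box
bounds and aggregate ℓ¹ budget `ε`) has the same optimal value as the small linear
program over the `2T` aggregated variables `z⁺_t, z⁻_t`. -/
theorem stmt6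
    (I T S : ℕ) (hI : 1 ≤ I) (hT : 1 ≤ T) (hS : 1 ≤ S)
    (ε : ℝ) (hε : 0 ≤ ε)
    (c : Fin T → ℝ)
    (vl vu : Fin I → Fin S → Fin T → ℝ)
    (hvl : ∀ i s t, vl i s t ≤ 0) (hvu : ∀ i s t, 0 ≤ vu i s t)
    (zubp zubm : Fin T → ℝ)
    (hzubp : ∀ t, zubp t = ∑ i, ∑ s, vu i s t)
    (hzubm : ∀ t, zubm t = -∑ i, ∑ s, vl i s t) :
    sSup { x : ℝ |
      ∃ v : Fin I → Fin S → Fin T → ℝ,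
        (∀ i s t, vl i s t ≤ v i s t ∧ v i s t ≤ vu i s t) ∧
        (1 / (S : ℝ)) * ∑ i, ∑ s, ∑ t, |v i s t| ≤ ε ∧
        x = (1 / (S : ℝ)) * ∑ i, ∑ s, ∑ t, c t * v i s t }
    = sSup { x : ℝ |
      ∃ zp zm : Fin T → ℝ,
        (∀ t, 0 ≤ zp t) ∧ (∀ t, 0 ≤ zm t) ∧
        (1 / (S : ℝ)) * ∑ t, (zp t + zm t) ≤ ε ∧
        (∀ t, zp t ≤ zubp t) ∧ (∀ t, zm t ≤ zubm t) ∧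
        x = (1 / (S : ℝ)) * ∑ t, c t * (zp t - zm t) } := by
  congr 1
  ext x
  simp only [Set.mem_setOf_eq]
  constructor
  · rintro ⟨v, hbox, hbud, hx⟩
    refine ⟨fun t => ∑ i, ∑ s, max (v i s t) 0,
            fun t => ∑ i, ∑ s, max (-(v i s t)) 0, ?_, ?_, ?_, ?_, ?_, ?_⟩
    · intro t
      exact Finset.sum_nonneg fun i _ => Finset.sum_nonneg fun s _ => le_max_right _ _
    · intro t
      exact Finset.sum_nonneg fun i _ => Finset.sum_nonneg fun s _ => le_max_right _ _
    · have key : ∑ t, ((∑ i, ∑ s, max (v i s t) 0) + ∑ i, ∑ s, max (-(v i s t)) 0)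
          = ∑ i, ∑ s, ∑ t, |v i s t| := by
        rw [sum_rot (f := fun i s t => |v i s t|)]
        refine Finset.sum_congr rfl fun t _ => ?_
        rw [← Finset.sum_add_distrib]
        refine Finset.sum_congr rfl fun i _ => ?_
        rw [← Finset.sum_add_distrib]
        exact Finset.sum_congr rfl fun s _ => max_add_max _
      rw [key]; exact hbud
    · intro t
      rw [hzubp]
      refine Finset.sum_le_sum fun i _ => Finset.sum_le_sum fun s _ => ?_
      exact max_le (hbox i s t).2 (hvu i s t)
    · intro t
      rw [hzubm, ← Finset.sum_neg_distrib]
      refine Finset.sum_le_sum fun i _ => ?_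
      rw [← Finset.sum_neg_distrib]
      refine Finset.sum_le_sum fun s _ => ?_
      exact max_le (neg_le_neg (hbox i s t).1) (neg_nonneg.2 (hvl i s t))
    · rw [hx]
      congr 1
      rw [sum_rot (f := fun i s t => c t * v i s t)]
      refine Finset.sum_congr rfl fun t _ => ?_
      rw [← Finset.sum_sub_distrib]
      rw [Finset.mul_sum]
      refine Finset.sum_congr rfl fun i _ => ?_
      rw [← Finset.sum_sub_distrib, Finset.mul_sum]
      refine Finset.sum_congr rfl fun s _ => ?_
      rw [max_sub_max]
  · rintro ⟨zp, zm, hzp, hzm, hbud, hzpu, hzmu, hx⟩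
    set αp : Fin T → ℝ := fun t => zp t / zubp t with hαp
    set αm : Fin T → ℝ := fun t => zm t / zubm t with hαm
    have hzubp0 : ∀ t, 0 ≤ zubp t := fun t => le_trans (hzp t) (hzpu t)
    have hzubm0 : ∀ t, 0 ≤ zubm t := fun t => le_trans (hzm t) (hzmu t)
    have hαp0 : ∀ t, 0 ≤ αp t := fun t => div_nonneg (hzp t) (hzubp0 t)
    have hαm0 : ∀ t, 0 ≤ αm t := fun t => div_nonneg (hzm t) (hzubm0 t)
    have hαp1 : ∀ t, αp t ≤ 1 := by
      intro t
      rcases eq_or_lt_of_le (hzubp0 t) with h | h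
      · simp [hαp, ← h]
      · exact div_le_one_of_le₀ (hzpu t) (le_of_lt h)
    have hαm1 : ∀ t, αm t ≤ 1 := by
      intro t
      rcases eq_or_lt_of_le (hzubm0 t) with h | h
      · simp [hαm, ← h]
      · exact div_le_one_of_le₀ (hzmu t) (le_of_lt h)
    have hαpz : ∀ t, αp t * zubp t = zp t := by
      intro t
      rcases eq_or_lt_of_le (hzubp0 t) with h | h
      · have : zp t = 0 := le_antisymm (h ▸ hzpu t) (hzp t)
        simp [this, hαp, ← h]
      · simp [hαp]; field_simp
    have hαmz : ∀ t, αm t * zubm t = zm t := by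
      intro t
      rcases eq_or_lt_of_le (hzubm0 t) with h | h
      · have : zm t = 0 := le_antisymm (h ▸ hzmu t) (hzm t)
        simp [this, hαm, ← h]
      · simp [hαm]; field_simp
    refine ⟨fun i s t => αp t * vu i s t + αm t * vl i s t, ?_, ?_, ?_⟩
    · intro i s t
      have h1 : 0 ≤ αp t * vu i s t := mul_nonneg (hαp0 t) (hvu i s t)
      have h2 : αm t * vl i s t ≤ 0 := mul_nonpos_of_nonneg_of_nonpos (hαm0 t) (hvl i s t)
      have h3 : 0 ≤ (1 - αm t) * (-vl i s t) :=
        mul_nonneg (by linarith [hαm1 t]) (by linarith [hvl i s t])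
      have h4 : 0 ≤ (1 - αp t) * vu i s t :=
        mul_nonneg (by linarith [hαp1 t]) (hvu i s t)
      refine ⟨?_, ?_⟩
      · show vl i s t ≤ αp t * vu i s t + αm t * vl i s t
        nlinarith
      · show αp t * vu i s t + αm t * vl i s t ≤ vu i s t
        nlinarith
    · have habs : ∀ i s t, |αp t * vu i s t + αm t * vl i s t|
          ≤ αp t * vu i s t - αm t * vl i s t := by
        intro i s t
        rw [abs_le]
        constructor
        · nlinarith [mul_nonneg (hαp0 t) (hvu i s t)]
        · nlinarith [mul_nonpos_of_nonneg_of_nonpos (hαm0 t) (hvl i s t)]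
      have hS0 : (0:ℝ) ≤ 1 / (S : ℝ) := by positivity
      refine le_trans (mul_le_mul_of_nonneg_left ?_ hS0) hbud
      calc ∑ i, ∑ s, ∑ t, |αp t * vu i s t + αm t * vl i s t|
          ≤ ∑ i, ∑ s, ∑ t, (αp t * vu i s t - αm t * vl i s t) := by
            refine Finset.sum_le_sum fun i _ => Finset.sum_le_sum fun s _ =>
              Finset.sum_le_sum fun t _ => habs i s t
        _ = ∑ t, (zp t + zm t) := by
            rw [sum_rot (f := fun i s t => αp t * vu i s t - αm t * vl i s t)]
            refine Finset.sum_congr rfl fun t _ => ?_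
            have : ∑ i, ∑ s, (αp t * vu i s t - αm t * vl i s t)
                = αp t * (∑ i, ∑ s, vu i s t) - αm t * (∑ i, ∑ s, vl i s t) := by
              simp [Finset.sum_sub_distrib, Finset.mul_sum]
            rw [this, ← hzubp t]
            have hm : (∑ i, ∑ s, vl i s t) = -zubm t := by rw [hzubm]; ring
            rw [hm, hαpz t]
            linear_combination hαmz t
    · rw [hx]
      congr 1
      rw [sum_rot (f := fun i s t => c t * (αp t * vu i s t + αm t * vl i s t))]
      refine Finset.sum_congr rfl fun t _ => ?_
      have key : ∑ i, ∑ s, c t * (αp t * vu i s t + αm t * vl i s t)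
          = (c t * αp t) * (∑ i, ∑ s, vu i s t) + (c t * αm t) * (∑ i, ∑ s, vl i s t) := by
        rw [Finset.mul_sum, Finset.mul_sum, ← Finset.sum_add_distrib]
        refine Finset.sum_congr rfl fun i _ => ?_
        rw [Finset.mul_sum, Finset.mul_sum, ← Finset.sum_add_distrib]
        refine Finset.sum_congr rfl fun s _ => by ring
      have hm : (∑ i, ∑ s, vl i s t) = -zubm t := by rw [hzubm]; ring
      rw [key, ← hzubp t, hm]
      linear_combination (-(c t)) * hαpz t + c t * hαmz t
end

section
/- Let n, S ≥ 1 be integers, ε ≥ 0, and λ ≥ 0. Let Ω ⊆ ℝ^n be a nonempty compact set, let f : ℝ^n → ℝ be continuous, and let ŵ^1, …, ŵ^S ∈ ℝ^n be samples. Then every Borel probability measure P on ℝ^n with P(Ω) = 1 and d_w(P, P_e) ≤ ε satisfies ∫ f dP ≤ λ·ε + (1/S) ∑_{s=1}^S sup_{w ∈ Ω} ( f(w) − λ ‖w − ŵ^s‖₁ ). -/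
open MeasureTheory
open scoped ENNReal

/-- the weak-duality bound underlying Proposition 1 of the paper.
For any `λ ≥ 0`, the expected cost `∫ f dP` under any distribution `P` in the
Wasserstein ball of radius `ε` (ℓ¹ ground metric) around the empirical distribution
that is supported on the compact set `Ω` is bounded above by
`λ·ε + (1/S) ∑_s sup_{w ∈ Ω} (f w − λ ‖w − ŵ^s‖₁)`. -/
theorem stmt10
    (n S : ℕ) (hn : 1 ≤ n) (hS : 1 ≤ S)
    (ε lam : ℝ) (hε : 0 ≤ ε) (hlam : 0 ≤ lam)
    (Ω : Set (Fin n → ℝ)) (hΩne : Ω.Nonempty) (hΩc : IsCompact Ω)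
    (f : (Fin n → ℝ) → ℝ) (hf : Continuous f)
    (what : Fin S → Fin n → ℝ)
    (P : Measure (Fin n → ℝ)) [IsProbabilityMeasure P]
    (hPΩ : P Ω = 1)
    (hdw : ∀ δ : ℝ, 0 < δ →
      ∃ π : Measure ((Fin n → ℝ) × (Fin n → ℝ)),
        IsProbabilityMeasure π ∧
        π.map Prod.fst = P ∧
        π.map Prod.snd = (S : ℝ≥0∞)⁻¹ • ∑ s : Fin S, Measure.dirac (what s) ∧
        ∫⁻ p, ENNReal.ofReal (∑ j, |p.1 j - p.2 j|) ∂π ≤ ENNReal.ofReal (ε + δ)) :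
    ∫ w, f w ∂P
      ≤ lam * ε + (1 / (S : ℝ)) * ∑ s,
          sSup ((fun w => f w - lam * ∑ j, |w j - what s j|) '' Ω) := by
  classical
  set D : (Fin n → ℝ) → (Fin n → ℝ) → ℝ := fun x y => ∑ j, |x j - y j| with hDdef
  have hDcont : ∀ y, Continuous fun x => D x y := fun y =>
    continuous_finset_sum _ fun j _ => ((continuous_apply j).sub continuous_const).abs
  have hDsymm : ∀ x y, D x y = D y x := fun x y =>
    Finset.sum_congr rfl fun j _ => abs_sub_comm _ _
  have hDtri : ∀ x y z, D x z ≤ D x y + D y z := by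
    intro x y z
    rw [hDdef, ← Finset.sum_add_distrib]
    exact Finset.sum_le_sum fun j _ => abs_sub_le _ _ _
  have hDnonneg : ∀ x y, 0 ≤ D x y := fun x y =>
    Finset.sum_nonneg fun j _ => abs_nonneg _
  have hDself : ∀ x, D x x = 0 := fun x => by simp [hDdef]
  set g : (Fin n → ℝ) → ℝ := fun y => sSup ((fun w => f w - lam * D w y) '' Ω) with hgdef
  have hcontw : ∀ y, Continuous fun w => f w - lam * D w y := fun y =>
    hf.sub (continuous_const.mul (hDcont y))
  have hbdd : ∀ y, BddAbove ((fun w => f w - lam * D w y) '' Ω) := fun y =>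
    (hΩc.image (hcontw y)).bddAbove
  have hne : ∀ y, ((fun w => f w - lam * D w y) '' Ω).Nonempty := fun y => hΩne.image _
  have hle_g : ∀ y, ∀ w ∈ Ω, f w - lam * D w y ≤ g y := fun y w hw =>
    le_csSup (hbdd y) (Set.mem_image_of_mem _ hw)
  have hg_lip : ∀ y y', g y ≤ g y' + lam * D y y' := by
    intro y y'
    apply csSup_le (hne y)
    rintro a ⟨w, hw, rfl⟩
    dsimp only
    have h1 : D w y' ≤ D w y + D y y' := hDtri w y y'
    have h2 := mul_le_mul_of_nonneg_left h1 hlam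
    rw [mul_add] at h2
    have h3 := hle_g y' w hw
    linarith
  have hgcont : Continuous g := by
    rw [continuous_iff_continuousAt]
    intro x
    have hlow : Filter.Tendsto (fun y => g x - lam * D y x) (nhds x) (nhds (g x)) := by
      have h : Filter.Tendsto (fun y => g x - lam * D y x) (nhds x)
          (nhds (g x - lam * D x x)) :=
        Filter.Tendsto.sub tendsto_const_nhds
          ((continuous_const.mul (hDcont x)).tendsto x)
      simpa [hDself x] using h
    have hupp : Filter.Tendsto (fun y => g x + lam * D y x) (nhds x) (nhds (g x)) := by
      have h : Filter.Tendsto (fun y => g x + lam * D y x) (nhds x)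
          (nhds (g x + lam * D x x)) :=
        Filter.Tendsto.add tendsto_const_nhds
          ((continuous_const.mul (hDcont x)).tendsto x)
      simpa [hDself x] using h
    exact tendsto_of_tendsto_of_tendsto_of_le_of_le hlow hupp
      (fun y => by have h1 := hg_lip x y; rw [hDsymm x y] at h1; linarith)
      (fun y => by have h1 := hg_lip y x; linarith)
  obtain ⟨Cf, hCf⟩ : ∃ C, ∀ w ∈ Ω, ‖f w‖ ≤ C := by
    obtain ⟨w0, _, hmax⟩ := hΩc.exists_isMaxOn hΩne hf.norm.continuousOn
    exact ⟨‖f w0‖, fun w hw => hmax hw⟩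
  obtain ⟨Cg, hCg⟩ : ∃ C, ∀ s : Fin S, ‖g (what s)‖ ≤ C :=
    ⟨∑ t, ‖g (what t)‖, fun s =>
      Finset.single_le_sum (f := fun t => ‖g (what t)‖)
        (fun _ _ => norm_nonneg _) (Finset.mem_univ s)⟩
  have hΩm : MeasurableSet Ω := hΩc.isClosed.measurableSet
  have hPc : P Ωᶜ = 0 := by
    rw [measure_compl hΩm (measure_ne_top P Ω), hPΩ, measure_univ, tsub_self]
  have key : ∀ δ : ℝ, 0 < δ →
      ∫ w, f w ∂P ≤ (1 / (S : ℝ)) * ∑ s, g (what s) + lam * (ε + δ) := by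
    intro δ hδ
    obtain ⟨π, hπprob, h1, h2, h3⟩ := hdw δ hδ
    haveI := hπprob
    set c : ((Fin n → ℝ) × (Fin n → ℝ)) → ℝ := fun p => D p.1 p.2 with hcdef
    have hccont : Continuous c := by
      apply continuous_finset_sum
      intro j _
      exact (((continuous_apply j).comp continuous_fst).sub
        ((continuous_apply j).comp continuous_snd)).abs
    have hcnonneg : ∀ p, 0 ≤ c p := fun p => hDnonneg _ _
    have hcint : Integrable c π := by
      refine ⟨hccont.aestronglyMeasurable, ?_⟩
      rw [hasFiniteIntegral_iff_norm]
      have heq : ∀ p : (Fin n → ℝ) × (Fin n → ℝ),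
          ENNReal.ofReal ‖c p‖ = ENNReal.ofReal (c p) := fun p => by
        rw [Real.norm_of_nonneg (hcnonneg p)]
      calc ∫⁻ p, ENNReal.ofReal ‖c p‖ ∂π = ∫⁻ p, ENNReal.ofReal (c p) ∂π := by
            simp only [heq]
        _ ≤ ENNReal.ofReal (ε + δ) := h3
        _ < ⊤ := ENNReal.ofReal_lt_top
    have haefst : ∀ᵐ p ∂π, p.1 ∈ Ω := by
      have hmap : π (Prod.fst ⁻¹' Ωᶜ) = 0 := by
        rw [← Measure.map_apply measurable_fst hΩm.compl, h1, hPc]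
      refine ae_iff.2 ?_
      simpa [Set.preimage] using hmap
    have hTm : MeasurableSet (Set.range what) := (Set.finite_range what).measurableSet
    have haesnd : ∀ᵐ p ∂π, p.2 ∈ Set.range what := by
      have hPe : ((S : ℝ≥0∞)⁻¹ • ∑ s : Fin S, Measure.dirac (what s))
          (Set.range what)ᶜ = 0 := by
        rw [Measure.smul_apply, Measure.finset_sum_apply]
        have : ∀ s : Fin S, Measure.dirac (what s) (Set.range what)ᶜ = 0 := by
          intro s
          rw [Measure.dirac_apply' _ hTm.compl]
          simp [Set.indicator_of_notMem, Set.mem_range]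
        simp [this]
      have hmap : π (Prod.snd ⁻¹' (Set.range what)ᶜ) = 0 := by
        rw [← Measure.map_apply measurable_snd hTm.compl, h2, hPe]
      refine ae_iff.2 ?_
      simpa [Set.preimage] using hmap
    have hfπ : Integrable (fun p : (Fin n → ℝ) × (Fin n → ℝ) => f p.1) π :=
      (integrable_const Cf).mono' (hf.comp continuous_fst).aestronglyMeasurable
        (haefst.mono fun p hp => hCf _ hp)
    have hgπ : Integrable (fun p : (Fin n → ℝ) × (Fin n → ℝ) => g p.2) π :=
      (integrable_const Cg).mono' (hgcont.comp continuous_snd).aestronglyMeasurable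
        (haesnd.mono fun p hp => by obtain ⟨s, hs⟩ := hp; rw [← hs]; exact hCg s)
    have hInt1 : ∫ w, f w ∂P = ∫ p, f p.1 ∂π := by
      rw [← h1, integral_map measurable_fst.aemeasurable hf.aestronglyMeasurable]
    have hmono : ∫ p, f p.1 ∂π ≤ ∫ p, (g p.2 + lam * c p) ∂π := by
      refine integral_mono_ae hfπ (hgπ.add (hcint.const_mul lam)) ?_
      filter_upwards [haefst] with p hp
      have h := hle_g p.2 p.1 hp
      have hcp : c p = D p.1 p.2 := rfl
      rw [hcp]
      linarith
    have hsplit : ∫ p, (g p.2 + lam * c p) ∂π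
        = ∫ p, g p.2 ∂π + lam * ∫ p, c p ∂π := by
      rw [integral_add hgπ (hcint.const_mul lam), integral_const_mul]
    have hInt2 : ∫ p, g p.2 ∂π = (1 / (S : ℝ)) * ∑ s, g (what s) := by
      rw [← integral_map measurable_snd.aemeasurable hgcont.aestronglyMeasurable, h2,
        integral_smul_measure,
        integral_finset_sum_measure (fun s _ =>
          (integrable_const (g (what s))).congr (ae_eq_dirac g).symm)]
      simp [integral_dirac, ENNReal.toReal_inv, smul_eq_mul, one_div]
    have hInt3 : ∫ p, c p ∂π ≤ ε + δ := by
      rw [integral_eq_lintegral_of_nonneg_ae (ae_of_all _ hcnonneg)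
        hccont.aestronglyMeasurable]
      calc (∫⁻ p, ENNReal.ofReal (c p) ∂π).toReal
          ≤ (ENNReal.ofReal (ε + δ)).toReal :=
            ENNReal.toReal_mono ENNReal.ofReal_ne_top h3
        _ = ε + δ := ENNReal.toReal_ofReal (by linarith)
    calc ∫ w, f w ∂P = ∫ p, f p.1 ∂π := hInt1
      _ ≤ ∫ p, g p.2 ∂π + lam * ∫ p, c p ∂π := by rw [← hsplit]; exact hmono
      _ ≤ (1 / (S : ℝ)) * ∑ s, g (what s) + lam * (ε + δ) := by
          have h := mul_le_mul_of_nonneg_left hInt3 hlam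
          rw [hInt2]
          linarith
  have hEq : (∑ s, sSup ((fun w => f w - lam * ∑ j, |w j - what s j|) '' Ω))
      = ∑ s, g (what s) := by
    simp only [hgdef, hDdef]
  rw [hEq]
  refine le_of_forall_pos_le_add ?_
  intro η hη
  have hlp : (0:ℝ) < lam + 1 := by linarith
  have hδ : 0 < η / (lam + 1) := div_pos hη hlp
  have hk := key _ hδ
  have hld : lam * (η / (lam + 1)) ≤ η := by
    rw [mul_div_assoc']
    rw [div_le_iff₀ hlp]
    nlinarith
  linarith
end
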